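/- For every 3SAT formula φ on n boolean variables (n even, n ≥ 4), every vertex of G(φ) other than V₁ and V_{2n} has eccentricity strictly less than 3n − 1; consequently the only pair of vertices of G(φ) realizing the diameter is {V₁, V_{2n}}, and every diametral path of G(φ) is a shortest path joining V₁ and V_{2n}. -/

import Mathlib

/-!
Every vertex `u` lies within `depth u` of some literal vertex, and any two literal vertices are
at distance at most `n - 1` (along the ladder, switching sides on the last rung if needed). As
`depth u ≤ n`, with equality only at `V₁` and `V_{2n}`, every distance is at most `3n - 1`, and at
most `3n - 2` from any other vertex. Conversely, `level` changes by at most one along each edge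
and rises from `0` at `V₁` to `3n - 1` at `V_{2n}`: the clause paths, of length `n/2 + 1`, are too
long to shortcut the ladder. So the diameter is `3n - 1`, attained only by `{V₁, V_{2n}}`.
-/

open SimpleGraph

/-- Vertices of the graph `G(φ)` associated with a 3SAT formula `φ` with `m` clauses over `n`
boolean variables (`n` even):
* `lit i b` is the literal vertex `X_{i+1}` (if `b = true`) or `X̄_{i+1}` (if `b = false`);
* `chain k` is the vertex `V_{k+1}` of the two pending chains `V₁ — ⋯ — V_n` and
  `V_{n+1} — ⋯ — V_{2n}`;
* `clause j` is the vertex of the clause `C_{j+1}`;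
* `inner j t s` is the `(s+1)`-st internal vertex of the path of length `n/2 + 1` (with `n/2`
  internal vertices) joining the clause vertex `C_{j+1}` to the vertex of its `(t+1)`-st
  literal. -/
inductive Vert (n m : ℕ) : Type
  | lit : Fin n → Bool → Vert n m
  | chain : Fin (2 * n) → Vert n m
  | clause : Fin m → Vert n m
  | inner : Fin m → Fin 3 → Fin (n / 2) → Vert n m
  deriving DecidableEq

/-- The base (asymmetric) adjacency relation of `G(φ)`, where the 3SAT formula `φ` assigns to
each clause index `j` and each slot `t ∈ {0,1,2}` a literal `φ j t = (i, b)` (variable index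
`i`, polarity `b`):
* `X_i` and `X̄_i` are adjacent, and every vertex of `{X_i, X̄_i}` is adjacent to every vertex
  of `{X_{i+1}, X̄_{i+1}}`;
* `V₁ — ⋯ — V_n` and `V_{n+1} — ⋯ — V_{2n}` are paths, `V_n` is moreover adjacent to both
  `X₁, X̄₁` and `V_{n+1}` to both `X_n, X̄_n`;
* each clause vertex `C_j` is joined to the vertex of each of its literals by a path of length
  `n/2 + 1` whose `n/2` internal vertices are the `inner j t s`. -/
def satRel (n m : ℕ) (φ : Fin m → Fin 3 → Fin n × Bool) : Vert n m → Vert n m → Prop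
  | .lit i b, .lit i' b' => (i = i' ∧ b ≠ b') ∨ (i : ℕ) + 1 = (i' : ℕ)
  | .chain k, .chain k' => (k : ℕ) + 1 = (k' : ℕ) ∧ (k' : ℕ) ≠ n
  | .chain k, .lit i _ => ((k : ℕ) = n - 1 ∧ (i : ℕ) = 0) ∨ ((k : ℕ) = n ∧ (i : ℕ) = n - 1)
  | .clause j, .inner j' _ s => j = j' ∧ (s : ℕ) = 0
  | .inner j t s, .inner j' t' s' => j = j' ∧ t = t' ∧ (s : ℕ) + 1 = (s' : ℕ)
  | .inner j t s, .lit i b => (s : ℕ) = n / 2 - 1 ∧ φ j t = (i, b)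
  | _, _ => False

/-- The graph `G(φ)` associated with a 3SAT formula `φ`. -/
def Gphi (n m : ℕ) (φ : Fin m → Fin 3 → Fin n × Bool) : SimpleGraph (Vert n m) :=
  SimpleGraph.fromRel (satRel n m φ)

/-- The eccentricity of a vertex: the largest distance from `x` to any vertex. -/
noncomputable def ecc {V : Type*} (G : SimpleGraph V) (x : V) : ℕ :=
  sSup (Set.range (G.dist x))

namespace SimpleGraph

variable {V : Type*} {G : SimpleGraph V}

theorem edist_le_of_le_add {u v w : V} {a b c : ℕ} (huv : G.edist u v ≤ a)
    (hvw : G.edist v w ≤ b) (h : a + b ≤ c) : G.edist u w ≤ c :=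
  calc G.edist u w ≤ G.edist u v + G.edist v w := G.edist_triangle
    _ ≤ a + b := add_le_add huv hvw
    _ ≤ c := mod_cast h

theorem edist_le_of_adj_succ {N : ℕ} (f : Fin N → V) {i j : Fin N} (hij : i ≤ j)
    (hf : ∀ k k' : Fin N, i ≤ k → k' ≤ j → (k : ℕ) + 1 = k' → G.Adj (f k) (f k')) :
    G.edist (f i) (f j) ≤ (j - i : ℕ) := by
  obtain ⟨d, hd⟩ : ∃ d, (j : ℕ) = i + d := ⟨j - i, by omega⟩
  induction d generalizing j with
  | zero =>
    obtain rfl : j = i := Fin.ext hd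
    simp
  | succ d ih =>
    let j' : Fin N := ⟨i + d, by omega⟩
    have hj' : j' ≤ j := Fin.le_def.mpr (show (i : ℕ) + d ≤ j by omega)
    have hpath := ih (j := j') (Fin.le_def.mpr (Nat.le_add_right _ _))
      (fun k k' hk hk' => hf k k' hk (hk'.trans hj')) rfl
    have hlast := hf j' j (Fin.le_def.mpr (Nat.le_add_right _ _)) le_rfl
      (show (i : ℕ) + d + 1 = j by omega)
    exact edist_le_of_le_add hpath (edist_le_one_iff_adj_or_eq.mpr (.inl hlast))
      (show (i : ℕ) + d - i + 1 ≤ j - i by omega)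

theorem Walk.le_add_length (f : V → ℕ) (hf : ∀ ⦃x y⦄, G.Adj x y → f y ≤ f x + 1) {u v : V}
    (p : G.Walk u v) : f v ≤ f u + p.length := by
  induction p with
  | nil => simp
  | cons h p ih =>
    rw [length_cons]
    have := hf h
    omega

theorem Reachable.le_add_dist (f : V → ℕ) (hf : ∀ ⦃x y⦄, G.Adj x y → f y ≤ f x + 1) {u v : V}
    (h : G.Reachable u v) : f v ≤ f u + G.dist u v := by
  obtain ⟨p, hp⟩ := h.exists_walk_length_eq_dist
  exact hp ▸ p.le_add_length f hf

end SimpleGraph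

namespace Gphi

variable {n m : ℕ} {φ : Fin m → Fin 3 → Fin n × Bool}

theorem satRel_irrefl (u : Vert n m) : ¬ satRel n m φ u u := by
  cases u <;> simp [satRel]

theorem adj_of_satRel {u v : Vert n m} (h : satRel n m φ u v) : (Gphi n m φ).Adj u v :=
  (fromRel_adj _ _ _).mpr ⟨fun huv => satRel_irrefl v (huv ▸ h), .inl h⟩

theorem edist_le_one_of_satRel {u v : Vert n m} (h : satRel n m φ u v) :
    (Gphi n m φ).edist u v ≤ 1 :=
  edist_le_one_iff_adj_or_eq.mpr (.inl (adj_of_satRel h))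

theorem edist_lit_le_of_lt {i i' : Fin n} (h : i < i') (b b' : Bool) :
    (Gphi n m φ).edist (.lit i b) (.lit i' b') ≤ (i' - i : ℕ) := by
  -- climb the ladder on side `b`, switching to side `b'` on the last rung
  have := edist_le_of_adj_succ (G := Gphi n m φ) (fun k => .lit k (if k = i' then b' else b))
    h.le fun _ _ _ _ hk => adj_of_satRel (Or.inr hk)
  simpa [h.ne] using this

theorem edist_lit_le (hn : 2 ≤ n) (i i' : Fin n) (b b' : Bool) :
    (Gphi n m φ).edist (.lit i b) (.lit i' b') ≤ (n - 1 : ℕ) := by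
  have hi := i.isLt
  have hi' := i'.isLt
  rcases lt_trichotomy i i' with h | rfl | h
  · exact (edist_lit_le_of_lt h b b').trans (Nat.cast_le.mpr (by omega))
  · by_cases hb : b = b'
    · simp [hb]
    · exact (edist_le_one_of_satRel (u := .lit i b) (v := .lit i b') (Or.inl ⟨rfl, hb⟩)).trans
        (Nat.cast_le.mpr (by omega))
  · rw [SimpleGraph.edist_comm]
    exact (edist_lit_le_of_lt h b' b).trans (Nat.cast_le.mpr (by omega))

theorem edist_inner_lit_le (j : Fin m) (t : Fin 3) (s : Fin (n / 2)) :
    (Gphi n m φ).edist (.inner j t s) (.lit (φ j t).1 (φ j t).2) ≤ (n / 2 - s : ℕ) := by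
  have hs := s.isLt
  let last : Fin (n / 2) := ⟨n / 2 - 1, by omega⟩
  have hpath := edist_le_of_adj_succ (G := Gphi n m φ) (.inner j t) (i := s) (j := last)
    (Fin.le_def.mpr (by simp [last]; omega)) fun _ _ _ _ hk => adj_of_satRel ⟨rfl, rfl, hk⟩
  exact edist_le_of_le_add hpath (edist_le_one_of_satRel ⟨rfl, rfl⟩) (by simp [last]; omega)

def depth : Vert n m → ℕ
  | .lit _ _ => 0
  | .chain k => if (k : ℕ) < n then n - k else k + 1 - n
  | .clause _ => n / 2 + 1
  | .inner _ _ s => n / 2 - s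

theorem exists_edist_lit_le_depth (hn : 2 ≤ n) (u : Vert n m) :
    ∃ i b, (Gphi n m φ).edist u (.lit i b) ≤ depth u := by
  cases u with
  | lit i b => exact ⟨i, b, by simp⟩
  | chain k =>
    have hk := k.isLt
    by_cases hlow : (k : ℕ) < n
    · have hpath := edist_le_of_adj_succ (G := Gphi n m φ) Vert.chain (i := k)
        (j := ⟨n - 1, by omega⟩) (Fin.le_def.mpr (by simp; omega))
        fun _ k' _ hk' hkk' =>
          adj_of_satRel ⟨hkk', by have : (k' : ℕ) ≤ n - 1 := hk'; omega⟩
      refine ⟨⟨0, by omega⟩, true, edist_le_of_le_add hpath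
        (edist_le_one_of_satRel (Or.inl ⟨rfl, rfl⟩)) ?_⟩
      simp only [depth, if_pos hlow]
      omega
    · have hpath := edist_le_of_adj_succ (G := Gphi n m φ) Vert.chain (i := ⟨n, by omega⟩)
        (j := k) (Fin.le_def.mpr (by simp; omega))
        fun k _ hk _ hkk' =>
          adj_of_satRel ⟨hkk', by have : n ≤ (k : ℕ) := hk; omega⟩
      rw [SimpleGraph.edist_comm] at hpath
      refine ⟨⟨n - 1, by omega⟩, true, edist_le_of_le_add hpath
        (edist_le_one_of_satRel (Or.inr ⟨rfl, rfl⟩)) ?_⟩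
      simp only [depth, if_neg hlow]
      omega
  | clause j =>
    have h0 : 0 < n / 2 := by omega
    refine ⟨_, _, edist_le_of_le_add (edist_le_one_of_satRel (v := .inner j 0 ⟨0, h0⟩) ⟨rfl, rfl⟩)
      (edist_inner_lit_le j 0 ⟨0, h0⟩) ?_⟩
    simp only [depth]
    omega
  | inner j t s => exact ⟨_, _, edist_inner_lit_le j t s⟩

theorem edist_le_depth_add_depth (hn : 2 ≤ n) (u v : Vert n m) :
    (Gphi n m φ).edist u v ≤ (depth u + (n - 1) + depth v : ℕ) := by
  obtain ⟨i, b, hu⟩ := exists_edist_lit_le_depth (φ := φ) hn u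
  obtain ⟨i', b', hv⟩ := exists_edist_lit_le_depth (φ := φ) hn v
  rw [SimpleGraph.edist_comm] at hv
  exact edist_le_of_le_add (edist_le_of_le_add hu (edist_lit_le hn i i' b b') le_rfl) hv le_rfl

theorem depth_le (hn : 2 ≤ n) (u : Vert n m) : depth u ≤ n := by
  cases u with
  | chain k => have := k.isLt; simp only [depth]; split_ifs <;> omega
  | inner _ _ s => simp only [depth]; omega
  | _ => simp only [depth]; omega

theorem depth_le_sub_one (hn : 3 ≤ n) {u : Vert n m} (h₀ : u ≠ .chain ⟨0, by omega⟩)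
    (h₁ : u ≠ .chain ⟨2 * n - 1, by omega⟩) : depth u ≤ n - 1 := by
  cases u with
  | chain k =>
    have hk₀ : (k : ℕ) ≠ 0 := fun hk => h₀ (congrArg _ (Fin.ext hk))
    have hk₁ : (k : ℕ) ≠ 2 * n - 1 := fun hk => h₁ (congrArg _ (Fin.ext hk))
    have := k.isLt
    simp only [depth]
    split_ifs <;> omega
  | inner _ _ s => simp only [depth]; omega
  | _ => simp only [depth]; omega

theorem dist_le_of_ne_ends (hn : 3 ≤ n) {u : Vert n m} (h₀ : u ≠ .chain ⟨0, by omega⟩)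
    (h₁ : u ≠ .chain ⟨2 * n - 1, by omega⟩) (v : Vert n m) :
    (Gphi n m φ).dist u v ≤ 3 * n - 2 := by
  have := depth_le_sub_one hn h₀ h₁
  have := depth_le (by omega) v
  exact ENat.toNat_le_of_le_natCast
    ((edist_le_depth_add_depth (by omega) u v).trans (Nat.cast_le.mpr (by omega)))

theorem ediam_le (hn : 2 ≤ n) : (Gphi n m φ).ediam ≤ (3 * n - 1 : ℕ) :=
  ediam_le_iff.mpr fun u v => (edist_le_depth_add_depth hn u v).trans
    (Nat.cast_le.mpr (by have := depth_le hn u; have := depth_le hn v; omega))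

/-- On a clause path the level moves from the level `n + i` of its literal towards the clause
level `n + n / 2` at unit speed and then stays put. -/
def level (φ : Fin m → Fin 3 → Fin n × Bool) : Vert n m → ℕ
  | .lit i _ => n + i
  | .chain k => if (k : ℕ) < n then k else n + k
  | .clause _ => n + n / 2
  | .inner j t s => n + max ((φ j t).1 - (n / 2 - s)) (min ((φ j t).1 + (n / 2 - s)) (n / 2))

theorem level_le_of_satRel {u v : Vert n m} (h : satRel n m φ u v) :
    level φ v ≤ level φ u + 1 ∧ level φ u ≤ level φ v + 1 := by
  cases u <;> cases v <;> simp only [satRel] at h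
  case lit.lit i b i' b' =>
    rcases h with ⟨rfl, -⟩ | h <;> simp only [level] <;> omega
  case chain.lit k i b =>
    simp only [level]
    split_ifs <;> omega
  case chain.chain k k' =>
    simp only [level]
    split_ifs <;> omega
  case clause.inner j j' t s =>
    obtain ⟨rfl, hs⟩ := h
    have := (φ j t).1.isLt
    simp only [level, hs]
    omega
  case inner.inner j t s j' t' s' =>
    obtain ⟨rfl, rfl, hs⟩ := h
    simp only [level]
    omega
  case inner.lit j t s i b =>
    obtain ⟨hs, hφ⟩ := h
    have := s.isLt
    simp only [level, hs, hφ]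
    omega

theorem level_le_of_adj {u v : Vert n m} (h : (Gphi n m φ).Adj u v) :
    level φ v ≤ level φ u + 1 := by
  rcases ((fromRel_adj _ _ _).mp h).2 with h | h
  exacts [(level_le_of_satRel h).1, (level_le_of_satRel h).2]

theorem le_dist_ends (hn : 2 ≤ n) :
    3 * n - 1 ≤ (Gphi n m φ).dist (.chain ⟨0, by omega⟩) (.chain ⟨2 * n - 1, by omega⟩) := by
  have hreach := reachable_of_edist_ne_top
    (ne_top_of_le_ne_top (ENat.natCast_ne_top _) (edist_le_depth_add_depth (φ := φ) hn
      (.chain ⟨0, by omega⟩) (.chain ⟨2 * n - 1, by omega⟩)))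
  have := hreach.le_add_dist (level φ) fun _ _ => level_le_of_adj
  simp only [level] at this
  split_ifs at this <;> omega

theorem diam_eq (hn : 2 ≤ n) : (Gphi n m φ).diam = 3 * n - 1 :=
  le_antisymm (ENat.toNat_le_of_le_natCast (ediam_le hn))
    ((le_dist_ends hn).trans (dist_le_diam (ne_top_of_le_ne_top (ENat.natCast_ne_top _)
      (ediam_le hn))))

theorem ends_of_dist_eq_diam (hn : 3 ≤ n) {u v : Vert n m}
    (h : (Gphi n m φ).dist u v = (Gphi n m φ).diam) :
    (u = .chain ⟨0, by omega⟩ ∧ v = .chain ⟨2 * n - 1, by omega⟩) ∨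
      (u = .chain ⟨2 * n - 1, by omega⟩ ∧ v = .chain ⟨0, by omega⟩) := by
  rw [diam_eq (by omega)] at h
  have hu : u = .chain ⟨0, by omega⟩ ∨ u = .chain ⟨2 * n - 1, by omega⟩ := by
    by_contra! hu
    have := dist_le_of_ne_ends (φ := φ) hn hu.1 hu.2 v
    omega
  have hv : v = .chain ⟨0, by omega⟩ ∨ v = .chain ⟨2 * n - 1, by omega⟩ := by
    by_contra! hv
    have := dist_le_of_ne_ends (φ := φ) hn hv.1 hv.2 u
    rw [dist_comm] at this
    omega
  rcases hu with hu | hu <;> rcases hv with hv | hv <;> simp [hu, hv] at h ⊢ <;>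
    omega

theorem ecc_lt (hn : 3 ≤ n) {v : Vert n m} (h₀ : v ≠ .chain ⟨0, by omega⟩)
    (h₁ : v ≠ .chain ⟨2 * n - 1, by omega⟩) : ecc (Gphi n m φ) v < 3 * n - 1 := by
  have : Nonempty (Vert n m) := ⟨v⟩
  have := csSup_le (Set.range_nonempty _)
    (Set.forall_mem_range.mpr (dist_le_of_ne_ends (φ := φ) hn h₀ h₁))
  rw [ecc]
  omega

end Gphi

/-- For every 3SAT formula `φ` on `n` boolean variables (`n` even, `n ≥ 4`), every vertex of
`G(φ)` other than `V₁` and `V_{2n}` has eccentricity strictly less than `3n − 1`; consequently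
the only pair of vertices realizing the diameter is `{V₁, V_{2n}}`, and every diametral path
of `G(φ)` is a shortest path joining `V₁` and `V_{2n}`. -/
theorem Gphi_unique_diametral_pair (n m : ℕ) (h4 : 4 ≤ n)
    (φ : Fin m → Fin 3 → Fin n × Bool) :
    (∀ v : Vert n m, v ≠ Vert.chain ⟨0, by omega⟩ → v ≠ Vert.chain ⟨2 * n - 1, by omega⟩ →
      ecc (Gphi n m φ) v < 3 * n - 1) ∧
    (∀ u v : Vert n m, (Gphi n m φ).dist u v = (Gphi n m φ).diam →
      ((u = Vert.chain ⟨0, by omega⟩ ∧ v = Vert.chain ⟨2 * n - 1, by omega⟩) ∨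
       (u = Vert.chain ⟨2 * n - 1, by omega⟩ ∧ v = Vert.chain ⟨0, by omega⟩))) ∧
    (∀ (u v : Vert n m) (p : (Gphi n m φ).Walk u v),
      p.length = (Gphi n m φ).dist u v → (Gphi n m φ).dist u v = (Gphi n m φ).diam →
      ((u = Vert.chain ⟨0, by omega⟩ ∧ v = Vert.chain ⟨2 * n - 1, by omega⟩) ∨
       (u = Vert.chain ⟨2 * n - 1, by omega⟩ ∧ v = Vert.chain ⟨0, by omega⟩))) :=
  ⟨fun _ => Gphi.ecc_lt (by omega), fun _ _ => Gphi.ends_of_dist_eq_diam (by omega),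
    fun _ _ _ _ => Gphi.ends_of_dist_eq_diam (by omega)⟩
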